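/- arXiv:2111.04513 — 2 statements merged into one kernel-verified Lean document; each statement's English description precedes it below -/
import Mathlib

section
/- Any transit cluster T in a DAG G can be written as a disjoint union of finitely many transit components of G. -/
variable {α : Type*}

/-- All edges lie within the vertex set `V`. -/
def EdgesIn (V : Set α) (E : α → α → Prop) : Prop :=
  ∀ u v, E u v → u ∈ V ∧ v ∈ V

/-- The edge relation has no directed cycles. -/
def Acyclic (E : α → α → Prop) : Prop :=
  ∀ v, ¬ Relation.TransGen E v v

/-- A finite directed acyclic graph on vertex set `V`. -/
def IsDAG (V : Set α) (E : α → α → Prop) : Prop :=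
  V.Finite ∧ EdgesIn V E ∧ Acyclic E

/-- Receivers of `T`: members of `T` with a parent outside `T`. -/
def recs (E : α → α → Prop) (T : Set α) : Set α :=
  {v | v ∈ T ∧ ∃ u, u ∉ T ∧ E u v}

/-- Emitters of `T`: members of `T` with a child outside `T`. -/
def emis (E : α → α → Prop) (T : Set α) : Set α :=
  {v | v ∈ T ∧ ∃ u, u ∉ T ∧ E v u}

/-- Edges of `G[T^=]`: the subgraph induced by `T` with incoming edges of
receivers and outgoing edges of emitters removed. -/
def CutEdge (E : α → α → Prop) (T : Set α) (u v : α) : Prop :=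
  u ∈ T ∧ v ∈ T ∧ E u v ∧ v ∉ recs E T ∧ u ∉ emis E T

/-- Undirected reachability with respect to an edge relation. -/
def UndirReach (E : α → α → Prop) (u v : α) : Prop :=
  Relation.ReflTransGen (fun a b => E a b ∨ E b a) u v

/-- `T` is a transit cluster in the graph `(V, E)`. -/
def IsTransitCluster (V : Set α) (E : α → α → Prop) (T : Set α) : Prop :=
  T.Nonempty ∧ T ⊂ V ∧
  (∀ r₁ ∈ recs E T, ∀ r₂ ∈ recs E T,
    {u | u ∉ T ∧ E u r₁} = {u | u ∉ T ∧ E u r₂}) ∧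
  (∀ e₁ ∈ emis E T, ∀ e₂ ∈ emis E T,
    {u | u ∉ T ∧ E e₁ u} = {u | u ∉ T ∧ E e₂ u}) ∧
  (∀ x ∈ T, ∃ w, (w ∈ recs E T ∨ w ∈ emis E T) ∧ UndirReach (CutEdge E T) x w) ∧
  ((emis E T).Nonempty → ∀ r ∈ recs E T, ∃ e ∈ emis E T, Relation.ReflTransGen E r e) ∧
  ((recs E T).Nonempty → ∀ e ∈ emis E T, ∃ r ∈ recs E T, Relation.ReflTransGen E r e)

/-- Vertex set of the graph obtained by clustering `T` into the new vertex `t`. -/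
def ClusterVerts (V T : Set α) (t : α) : Set α := (V \ T) ∪ {t}

/-- Edge relation of the graph obtained by clustering `T` into the new vertex `t`:
edges not touching `T` are kept, the parents of `t` are the external parents of
`recs T`, and the children of `t` are the external children of `emis T`. -/
def ClusterEdge (E : α → α → Prop) (T : Set α) (t : α) (u v : α) : Prop :=
  (u ∉ T ∧ v ∉ T ∧ E u v) ∨
  (u ∉ T ∧ u ≠ t ∧ v = t ∧ ∃ r ∈ recs E T, E u r) ∨
  (u = t ∧ v ∉ T ∧ v ≠ t ∧ ∃ e ∈ emis E T, E e v)

/-- A transit component: a transit cluster that is connected (undirectedly)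
in the subgraph it induces. -/
def IsTransitComponent (V : Set α) (E : α → α → Prop) (T : Set α) : Prop :=
  IsTransitCluster V E T ∧
  ∀ u ∈ T, ∀ v ∈ T, UndirReach (fun a b => a ∈ T ∧ b ∈ T ∧ E a b) u v

/-! The pieces are the connected components of the subgraph induced by `T`; there are finitely
many since `V` is finite. A component `C` has no edge to `T \ C`, so a vertex of `C` has the
same external neighbours relative to `C` as relative to `T`. Hence the receivers and emitters of
`C` are those of `T` lying in `C`, paths of `G[T^=]` starting in `C` stay in `C`, and a directed
path from a vertex of `C` to an emitter of `T` reaches an emitter of `C` before leaving `T`.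
So each component inherits every transit-cluster condition from `T`. -/

def InducedEdge (E : α → α → Prop) (T : Set α) (a b : α) : Prop :=
  a ∈ T ∧ b ∈ T ∧ E a b

def inducedComponent (E : α → α → Prop) (T : Set α) (x : α) : Set α :=
  {y | UndirReach (InducedEdge E T) x y}

/-- `C` is a union of connected components of the subgraph induced by `T`. -/
def IsComponentUnion (E : α → α → Prop) (T C : Set α) : Prop :=
  C ⊆ T ∧ ∀ u ∈ T, ∀ v ∈ C, E u v ∨ E v u → u ∈ C

section

variable {E : α → α → Prop} {T C : Set α}

theorem UndirReach.symm {R : α → α → Prop} {a b : α} (h : UndirReach R a b) :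
    UndirReach R b a :=
  have : Std.Symm fun a b => R a b ∨ R b a := ⟨fun _ _ => Or.symm⟩
  (Relation.ReflTransGen.stdSymm (r := fun a b => R a b ∨ R b a)).symm _ _ h

theorem UndirReach.restrict {R S : α → α → Prop} {C : Set α}
    (hR : ∀ a b, R a b → (a ∈ C ↔ b ∈ C)) (hRS : ∀ a ∈ C, ∀ b ∈ C, R a b → S a b) {a b : α}
    (ha : a ∈ C) (h : UndirReach R a b) : b ∈ C ∧ UndirReach S a b := by
  induction h with
  | refl => exact ⟨ha, .refl⟩
  | @tail b c _ hbc ih =>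
    obtain ⟨hb, hab⟩ := ih
    rcases hbc with hbc | hcb
    · have hc := (hR b c hbc).1 hb
      exact ⟨hc, hab.tail (.inl (hRS b hb c hc hbc))⟩
    · have hc := (hR c b hcb).2 hb
      exact ⟨hc, hab.tail (.inr (hRS c hc b hb hcb))⟩

theorem recs_inter_subset_of_subset (hCT : C ⊆ T) : recs E T ∩ C ⊆ recs E C :=
  fun _ ⟨⟨_, u, hu, huv⟩, hv⟩ => ⟨hv, u, fun huC => hu (hCT huC), huv⟩

theorem emis_inter_subset_of_subset (hCT : C ⊆ T) : emis E T ∩ C ⊆ emis E C :=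
  recs_inter_subset_of_subset (E := flip E) hCT

namespace IsComponentUnion

theorem flip (hC : IsComponentUnion E T C) : IsComponentUnion (flip E) T C :=
  ⟨hC.1, fun u hu v hv huv => hC.2 u hu v hv huv.symm⟩

theorem mem_iff_of_adj (hC : IsComponentUnion E T C) {u v : α} (hu : u ∈ T) (hv : v ∈ T)
    (huv : E u v ∨ E v u) : u ∈ C ↔ v ∈ C :=
  ⟨fun h => hC.2 v hv u h huv.symm, fun h => hC.2 u hu v h huv⟩

theorem notMem_iff_of_adj (hC : IsComponentUnion E T C) {u v : α} (hv : v ∈ C)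
    (huv : E u v ∨ E v u) : u ∉ C ↔ u ∉ T :=
  ⟨fun huC huT => huC (hC.2 u huT v hv huv), fun huT huC => huT (hC.1 huC)⟩

theorem recs_subset (hC : IsComponentUnion E T C) : recs E C ⊆ recs E T :=
  fun _ ⟨hv, u, hu, huv⟩ => ⟨hC.1 hv, u, (hC.notMem_iff_of_adj hv (.inl huv)).1 hu, huv⟩

theorem emis_subset (hC : IsComponentUnion E T C) : emis E C ⊆ emis E T :=
  hC.flip.recs_subset

theorem cutEdge (hC : IsComponentUnion E T C) {a b : α} (h : CutEdge E T a b) (ha : a ∈ C)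
    (hb : b ∈ C) : CutEdge E C a b :=
  let ⟨_, _, hE, hbr, hae⟩ := h
  ⟨ha, hb, hE, fun h => hbr (hC.recs_subset h), fun h => hae (hC.emis_subset h)⟩

theorem undirReach_cutEdge (hC : IsComponentUnion E T C) {a w : α} (ha : a ∈ C)
    (h : UndirReach (CutEdge E T) a w) : w ∈ C ∧ UndirReach (CutEdge E C) a w :=
  h.restrict (fun _ _ h => hC.mem_iff_of_adj h.1 h.2.1 (.inl h.2.2.1))
    (fun _ ha _ hb h => hC.cutEdge h ha hb) ha

theorem undirReach_inducedEdge (hC : IsComponentUnion E T C) {a b : α} (ha : a ∈ C)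
    (h : UndirReach (InducedEdge E T) a b) : UndirReach (InducedEdge E C) a b :=
  (h.restrict (fun _ _ h => hC.mem_iff_of_adj h.1 h.2.1 (.inl h.2.2))
    (fun _ ha _ hb h => ⟨ha, hb, h.2.2⟩) ha).2

-- The path is cut where it first leaves `T`; the vertex just before is an emitter of `C`.
theorem exists_emis_reflTransGen (hC : IsComponentUnion E T C) {r e : α} (hr : r ∈ C)
    (h : Relation.ReflTransGen E r e) (he : e ∈ emis E T) :
    ∃ e' ∈ emis E C, Relation.ReflTransGen E r e' := by
  induction h using Relation.ReflTransGen.head_induction_on with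
  | refl => exact ⟨e, emis_inter_subset_of_subset hC.1 ⟨he, hr⟩, .refl⟩
  | @head a b hab _ ih =>
    by_cases hb : b ∈ T
    · obtain ⟨e', he', hbe'⟩ := ih ((hC.mem_iff_of_adj (hC.1 hr) hb (.inl hab)).1 hr)
      exact ⟨e', he', .head hab hbe'⟩
    · exact ⟨a, ⟨hr, b, fun hbC => hb (hC.1 hbC), hab⟩, .refl⟩

-- Receivers for `E` are the emitters for `flip E`.
theorem exists_recs_reflTransGen (hC : IsComponentUnion E T C) {r e : α} (he : e ∈ C)
    (h : Relation.ReflTransGen E r e) (hr : r ∈ recs E T) :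
    ∃ r' ∈ recs E C, Relation.ReflTransGen E r' e := by
  obtain ⟨r', hr', her'⟩ :=
    hC.flip.exists_emis_reflTransGen he (Relation.reflTransGen_swap.2 h) hr
  exact ⟨r', hr', Relation.reflTransGen_swap.1 her'⟩

end IsComponentUnion

theorem IsTransitCluster.of_isComponentUnion {V : Set α} (hT : IsTransitCluster V E T)
    (hC : IsComponentUnion E T C) (hne : C.Nonempty) : IsTransitCluster V E C := by
  obtain ⟨-, hTV, hpar, hchi, hcut, hrec, hemi⟩ := hT
  have parents_eq {r : α} (hr : r ∈ C) : {u | u ∉ C ∧ E u r} = {u | u ∉ T ∧ E u r} :=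
    Set.ext fun _ => and_congr_left fun h => hC.notMem_iff_of_adj hr (.inl h)
  have children_eq {e : α} (he : e ∈ C) : {u | u ∉ C ∧ E e u} = {u | u ∉ T ∧ E e u} :=
    Set.ext fun _ => and_congr_left fun h => hC.notMem_iff_of_adj he (.inr h)
  refine ⟨hne, Set.ssubset_of_subset_of_ssubset hC.1 hTV, ?_, ?_, ?_, ?_, ?_⟩
  · intro r₁ hr₁ r₂ hr₂
    rw [parents_eq hr₁.1, parents_eq hr₂.1]
    exact hpar r₁ (hC.recs_subset hr₁) r₂ (hC.recs_subset hr₂)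
  · intro e₁ he₁ e₂ he₂
    rw [children_eq he₁.1, children_eq he₂.1]
    exact hchi e₁ (hC.emis_subset he₁) e₂ (hC.emis_subset he₂)
  · intro x hx
    obtain ⟨w, hw, hxw⟩ := hcut x (hC.1 hx)
    obtain ⟨hwC, hxw⟩ := hC.undirReach_cutEdge hx hxw
    exact ⟨w, hw.imp (fun hw => recs_inter_subset_of_subset hC.1 ⟨hw, hwC⟩)
      (fun hw => emis_inter_subset_of_subset hC.1 ⟨hw, hwC⟩), hxw⟩
  · rintro ⟨e, he⟩ r hr
    obtain ⟨e, he, hre⟩ := hrec ⟨e, hC.emis_subset he⟩ r (hC.recs_subset hr)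
    exact hC.exists_emis_reflTransGen hr.1 hre he
  · rintro ⟨r, hr⟩ e he
    obtain ⟨r, hr, hre⟩ := hemi ⟨r, hC.recs_subset hr⟩ e (hC.emis_subset he)
    exact hC.exists_recs_reflTransGen he.1 hre hr

theorem mem_inducedComponent_self (x : α) : x ∈ inducedComponent E T x :=
  Relation.ReflTransGen.refl

theorem inducedComponent_eq_of_mem {x y : α} (h : y ∈ inducedComponent E T x) :
    inducedComponent E T y = inducedComponent E T x :=
  Set.ext fun _ => ⟨h.trans, h.symm.trans⟩

theorem inducedComponent_subset {x : α} (hx : x ∈ T) : inducedComponent E T x ⊆ T := by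
  intro y hy
  induction hy with
  | refl => exact hx
  | tail _ h => rcases h with ⟨-, h, -⟩ | ⟨h, -, -⟩ <;> exact h

theorem isComponentUnion_inducedComponent {x : α} (hx : x ∈ T) :
    IsComponentUnion E T (inducedComponent E T x) :=
  ⟨inducedComponent_subset hx, fun _ hu _ hv huv =>
    have hvT := inducedComponent_subset hx hv
    hv.tail (huv.symm.imp (fun h => ⟨hvT, hu, h⟩) (fun h => ⟨hu, hvT, h⟩))⟩

theorem IsTransitCluster.isTransitComponent_inducedComponent {V : Set α}
    (hT : IsTransitCluster V E T) {x : α} (hx : x ∈ T) :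
    IsTransitComponent V E (inducedComponent E T x) :=
  have hC := isComponentUnion_inducedComponent hx
  ⟨hT.of_isComponentUnion hC ⟨x, mem_inducedComponent_self x⟩,
    fun _ hu _ hv => hC.undirReach_inducedEdge hu (hu.symm.trans hv)⟩

end

/-- any transit cluster is a disjoint union of finitely many
transit components. -/
theorem transit_cluster_eq_disjoint_union_of_components
    (V : Set α) (E : α → α → Prop) (T : Set α)
    (hdag : IsDAG V E)
    (hT : IsTransitCluster V E T) :
    ∃ 𝒞 : Finset (Set α),
      (∀ C ∈ 𝒞, IsTransitComponent V E C) ∧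
      (∀ C ∈ 𝒞, ∀ D ∈ 𝒞, C ≠ D → C ∩ D = ∅) ∧
      T = ⋃ C ∈ 𝒞, C := by
  have hTfin : T.Finite := hdag.1.subset hT.2.1.subset
  have hfin : (inducedComponent E T '' T).Finite := hTfin.image _
  refine ⟨hfin.toFinset, ?_, ?_, ?_⟩
  · simp only [Set.Finite.mem_toFinset, Set.forall_mem_image]
    exact fun x hx => hT.isTransitComponent_inducedComponent hx
  · simp only [Set.Finite.mem_toFinset, Set.forall_mem_image]
    intro x _ y _ hxy
    by_contra hne
    obtain ⟨z, hzx, hzy⟩ := Set.nonempty_iff_ne_empty.2 hne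
    exact hxy ((inducedComponent_eq_of_mem hzx).symm.trans (inducedComponent_eq_of_mem hzy))
  · refine Set.Subset.antisymm (fun x hx => ?_) ?_
    · exact Set.mem_biUnion (hfin.mem_toFinset.2 ⟨x, hx, rfl⟩) (mem_inducedComponent_self x)
    · simp only [Set.Finite.mem_toFinset, Set.iUnion_subset_iff, Set.forall_mem_image]
      exact fun x hx => inducedComponent_subset hx
end

section
/- Let T be a transit cluster in a DAG G with rec(T) ≠ ∅ and em(T) ≠ ∅, and let G⁺ be obtained from G by adding two new vertices t_{k+1} and t_{k+2}, edges from every external parent of rec(T) to t_{k+1}, edges from t_{k+2} to every external child of em(T), and the edge t_{k+1} → t_{k+2}. Then T⁺ = T ∪ {t_{k+1}, t_{k+2}} is a transit cluster in G⁺, and clustering T⁺ in G⁺ yields the same graph as clustering T in G. -/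
variable {α : Type*}

/-- External parents of the receivers of `T`. -/
def ExtPa (E : α → α → Prop) (T : Set α) : Set α :=
  {u | u ∉ T ∧ ∃ r ∈ recs E T, E u r}

/-- External children of the emitters of `T`. -/
def ExtCh (E : α → α → Prop) (T : Set α) : Set α :=
  {v | v ∉ T ∧ ∃ e ∈ emis E T, E e v}

/-- The edge relation obtained by adding a new receiver `w₁` and a new emitter
`w₂`: edges from every external parent of `recs T` to `w₁`, from `w₂` to every
external child of `emis T`, and the edge `w₁ → w₂`. -/
def PairExtEdge (E : α → α → Prop) (T : Set α) (w₁ w₂ : α) : α → α → Prop :=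
  fun u v => E u v ∨ (u ∈ ExtPa E T ∧ v = w₁) ∨ (u = w₂ ∧ v ∈ ExtCh E T) ∨
    (u = w₁ ∧ v = w₂)

/-!
`w₁` and `w₂` become a receiver and an emitter of `T ∪ {w₁, w₂}` whose external parents,
resp. children, are exactly the common external parents of `recs T`, resp. children of
`emis T`, while the edges outside the cluster do not change. So the receivers and emitters
become `recs T ∪ {w₁}` and `emis T ∪ {w₂}` with the same shared external neighbourhoods, the
edge `w₁ → w₂` supplies the required paths for the new ones, and clustering sees the same
outside edges, external parents and external children as before.
-/

section ExternalNeighbours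

variable {V T : Set α} {E : α → α → Prop}

theorem extPa_subset_diff (hE : EdgesIn V E) : ExtPa E T ⊆ V \ T :=
  fun _ ⟨huT, _, _, hur⟩ => ⟨(hE _ _ hur).1, huT⟩

theorem extCh_subset_diff (hE : EdgesIn V E) : ExtCh E T ⊆ V \ T :=
  fun _ ⟨hvT, _, _, hev⟩ => ⟨(hE _ _ hev).2, hvT⟩

theorem extPa_nonempty (hrec : (recs E T).Nonempty) : (ExtPa E T).Nonempty := by
  obtain ⟨r, hrT, u, huT, hur⟩ := hrec
  exact ⟨u, huT, r, ⟨hrT, u, huT, hur⟩, hur⟩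

theorem extCh_nonempty (hemi : (emis E T).Nonempty) : (ExtCh E T).Nonempty := by
  obtain ⟨e, heT, v, hvT, hev⟩ := hemi
  exact ⟨v, hvT, e, ⟨heT, v, hvT, hev⟩, hev⟩

theorem parents_eq_extPa
    (hpar : ∀ r₁ ∈ recs E T, ∀ r₂ ∈ recs E T,
      {u | u ∉ T ∧ E u r₁} = {u | u ∉ T ∧ E u r₂})
    {r : α} (hr : r ∈ recs E T) : {u | u ∉ T ∧ E u r} = ExtPa E T := by
  ext u
  refine ⟨fun ⟨huT, hur⟩ => ⟨huT, r, hr, hur⟩, ?_⟩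
  rintro ⟨huT, r', hr', hur'⟩
  rw [hpar r hr r' hr']
  exact ⟨huT, hur'⟩

theorem children_eq_extCh
    (hch : ∀ e₁ ∈ emis E T, ∀ e₂ ∈ emis E T,
      {v | v ∉ T ∧ E e₁ v} = {v | v ∉ T ∧ E e₂ v})
    {e : α} (he : e ∈ emis E T) : {v | v ∉ T ∧ E e v} = ExtCh E T := by
  ext v
  refine ⟨fun ⟨hvT, hev⟩ => ⟨hvT, e, he, hev⟩, ?_⟩
  rintro ⟨hvT, e', he', he'v⟩
  rw [hch e he e' he']
  exact ⟨hvT, he'v⟩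

theorem extPa_eq_of_forall_parents_eq {P : Set α} (hrec : (recs E T).Nonempty)
    (h : ∀ r ∈ recs E T, {u | u ∉ T ∧ E u r} = P) : ExtPa E T = P := by
  obtain ⟨r₀, hr₀⟩ := hrec
  ext u
  constructor
  · rintro ⟨huT, r, hr, hur⟩
    rw [← h r hr]
    exact ⟨huT, hur⟩
  · intro hu
    rw [← h r₀ hr₀] at hu
    exact ⟨hu.1, r₀, hr₀, hu.2⟩

theorem extCh_eq_of_forall_children_eq {C : Set α} (hemi : (emis E T).Nonempty)
    (h : ∀ e ∈ emis E T, {v | v ∉ T ∧ E e v} = C) : ExtCh E T = C := by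
  obtain ⟨e₀, he₀⟩ := hemi
  ext v
  constructor
  · rintro ⟨hvT, e, he, hev⟩
    rw [← h e he]
    exact ⟨hvT, hev⟩
  · intro hv
    rw [← h e₀ he₀] at hv
    exact ⟨hv.1, e₀, he₀, hv.2⟩

end ExternalNeighbours

section Clustering

theorem UndirReach.mono {r p : α → α → Prop} (h : r ≤ p) {a b : α}
    (hab : UndirReach r a b) : UndirReach p a b :=
  Relation.ReflTransGen.mono (fun x y => Or.imp (h x y) (h y x)) _ _ hab

theorem clusterEdge_iff (E : α → α → Prop) (T : Set α) (t u v : α) :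
    ClusterEdge E T t u v ↔
      (u ∉ T ∧ v ∉ T ∧ E u v) ∨ (u ≠ t ∧ v = t ∧ u ∈ ExtPa E T) ∨
        (u = t ∧ v ≠ t ∧ v ∈ ExtCh E T) := by
  simp only [ClusterEdge, ExtPa, ExtCh, Set.mem_ofPred_eq]
  grind

theorem clusterEdge_eq_of_external_eq {E E' : α → α → Prop} {T T' : Set α} (t : α)
    (hext : ∀ u v, (u ∉ T ∧ v ∉ T ∧ E u v) ↔ (u ∉ T' ∧ v ∉ T' ∧ E' u v))
    (hpa : ExtPa E T = ExtPa E' T') (hch : ExtCh E T = ExtCh E' T') :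
    ClusterEdge E T t = ClusterEdge E' T' t := by
  funext u v
  rw [clusterEdge_iff, clusterEdge_iff, hext, hpa, hch]

theorem clusterVerts_union_of_disjoint {V T S : Set α} (t : α) (h : Disjoint V S) :
    ClusterVerts (V ∪ S) (T ∪ S) t = ClusterVerts V T t := by
  have hdiff : (V ∪ S) \ (T ∪ S) = V \ T := by
    ext x
    have hxS : x ∈ V → x ∉ S := fun hx => Set.disjoint_left.1 h hx
    simp only [Set.mem_sdiff, Set.mem_union]
    tauto
  rw [ClusterVerts, ClusterVerts, hdiff]

end Clustering

section PairExtension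

variable {V T : Set α} {E : α → α → Prop} {w₁ w₂ : α}

theorem mem_union_pair_iff_of_mem (hw1 : w₁ ∉ V) (hw2 : w₂ ∉ V) {x : α} (hx : x ∈ V) :
    x ∈ T ∪ {w₁, w₂} ↔ x ∈ T := by
  have h1 : x ≠ w₁ := fun h => hw1 (h ▸ hx)
  have h2 : x ≠ w₂ := fun h => hw2 (h ▸ hx)
  simp [h1, h2]

theorem notMem_union_pair (hw1 : w₁ ∉ V) (hw2 : w₂ ∉ V) {x : α} (hx : x ∈ V \ T) :
    x ∉ T ∪ {w₁, w₂} := by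
  rw [mem_union_pair_iff_of_mem hw1 hw2 hx.1]
  exact hx.2

theorem pairExtEdge_external_iff (hE : EdgesIn V E) (hw1 : w₁ ∉ V) (hw2 : w₂ ∉ V)
    (u v : α) :
    (u ∉ T ∪ {w₁, w₂} ∧ v ∉ T ∪ {w₁, w₂} ∧ PairExtEdge E T w₁ w₂ u v) ↔
      (u ∉ T ∧ v ∉ T ∧ E u v) := by
  constructor
  · rintro ⟨hu, hv, huv | ⟨-, rfl⟩ | ⟨rfl, -⟩ | ⟨rfl, -⟩⟩
    · exact ⟨fun h => hu (Or.inl h), fun h => hv (Or.inl h), huv⟩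
    all_goals simp at hu hv
  · rintro ⟨hu, hv, huv⟩
    exact ⟨notMem_union_pair hw1 hw2 ⟨(hE _ _ huv).1, hu⟩,
      notMem_union_pair hw1 hw2 ⟨(hE _ _ huv).2, hv⟩, Or.inl huv⟩

theorem pairExtEdge_parents_of_mem (hE : EdgesIn V E) (hw1 : w₁ ∉ V) (hw2 : w₂ ∉ V)
    {r : α} (hr : r ∈ V) :
    {u | u ∉ T ∪ {w₁, w₂} ∧ PairExtEdge E T w₁ w₂ u r} = {u | u ∉ T ∧ E u r} := by
  ext u
  constructor
  · rintro ⟨hu, hur | ⟨-, rfl⟩ | ⟨rfl, -⟩ | ⟨rfl, -⟩⟩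
    · exact ⟨fun h => hu (Or.inl h), hur⟩
    · exact absurd hr hw1
    all_goals simp at hu
  · rintro ⟨hu, hur⟩
    exact ⟨notMem_union_pair hw1 hw2 ⟨(hE _ _ hur).1, hu⟩, Or.inl hur⟩

theorem pairExtEdge_children_of_mem (hE : EdgesIn V E) (hw1 : w₁ ∉ V) (hw2 : w₂ ∉ V)
    {e : α} (he : e ∈ V) :
    {v | v ∉ T ∪ {w₁, w₂} ∧ PairExtEdge E T w₁ w₂ e v} = {v | v ∉ T ∧ E e v} := by
  ext v
  constructor
  · rintro ⟨hv, hev | ⟨-, rfl⟩ | ⟨rfl, -⟩ | ⟨-, rfl⟩⟩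
    · exact ⟨fun h => hv (Or.inl h), hev⟩
    · simp at hv
    · exact absurd he hw2
    · simp at hv
  · rintro ⟨hv, hev⟩
    exact ⟨notMem_union_pair hw1 hw2 ⟨(hE _ _ hev).2, hv⟩, Or.inl hev⟩

theorem pairExtEdge_parents_left (hE : EdgesIn V E) (hw1 : w₁ ∉ V) (hw2 : w₂ ∉ V) :
    {u | u ∉ T ∪ {w₁, w₂} ∧ PairExtEdge E T w₁ w₂ u w₁} = ExtPa E T := by
  ext u
  constructor
  · rintro ⟨hu, hu₁ | ⟨hpa, -⟩ | ⟨rfl, -⟩ | ⟨rfl, -⟩⟩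
    · exact absurd (hE _ _ hu₁).2 hw1
    · exact hpa
    all_goals simp at hu
  · intro hpa
    exact ⟨notMem_union_pair hw1 hw2 (extPa_subset_diff hE hpa), Or.inr (Or.inl ⟨hpa, rfl⟩)⟩

theorem pairExtEdge_children_right (hE : EdgesIn V E) (hw1 : w₁ ∉ V) (hw2 : w₂ ∉ V) :
    {v | v ∉ T ∪ {w₁, w₂} ∧ PairExtEdge E T w₁ w₂ w₂ v} = ExtCh E T := by
  ext v
  constructor
  · rintro ⟨hv, h₂v | ⟨-, rfl⟩ | ⟨-, hch⟩ | ⟨-, rfl⟩⟩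
    · exact absurd (hE _ _ h₂v).1 hw2
    · simp at hv
    · exact hch
    · simp at hv
  · intro hch
    exact ⟨notMem_union_pair hw1 hw2 (extCh_subset_diff hE hch),
      Or.inr (Or.inr (Or.inl ⟨rfl, hch⟩))⟩

theorem recs_pairExtEdge (hE : EdgesIn V E) (hw1 : w₁ ∉ V) (hw2 : w₂ ∉ V)
    (hrec : (recs E T).Nonempty) :
    recs (PairExtEdge E T w₁ w₂) (T ∪ {w₁, w₂}) = recs E T ∪ {w₁} := by
  ext v
  constructor
  · rintro ⟨hv, u, hu, huv | ⟨-, rfl⟩ | ⟨rfl, -⟩ | ⟨rfl, -⟩⟩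
    · exact Or.inl ⟨(mem_union_pair_iff_of_mem hw1 hw2 (hE _ _ huv).2).1 hv, u,
        fun h => hu (Or.inl h), huv⟩
    · exact Or.inr rfl
    all_goals simp at hu
  · rintro (⟨hvT, u, huT, huv⟩ | rfl)
    · exact ⟨Or.inl hvT, u, notMem_union_pair hw1 hw2 ⟨(hE _ _ huv).1, huT⟩, Or.inl huv⟩
    · obtain ⟨u, hu⟩ := extPa_nonempty hrec
      exact ⟨by simp, u, notMem_union_pair hw1 hw2 (extPa_subset_diff hE hu),
        Or.inr (Or.inl ⟨hu, rfl⟩)⟩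

theorem emis_pairExtEdge (hE : EdgesIn V E) (hw1 : w₁ ∉ V) (hw2 : w₂ ∉ V)
    (hemi : (emis E T).Nonempty) :
    emis (PairExtEdge E T w₁ w₂) (T ∪ {w₁, w₂}) = emis E T ∪ {w₂} := by
  ext e
  constructor
  · rintro ⟨he, v, hv, hev | ⟨-, rfl⟩ | ⟨rfl, -⟩ | ⟨-, rfl⟩⟩
    · exact Or.inl ⟨(mem_union_pair_iff_of_mem hw1 hw2 (hE _ _ hev).1).1 he, v,
        fun h => hv (Or.inl h), hev⟩
    · simp at hv
    · exact Or.inr rfl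
    · simp at hv
  · rintro (⟨heT, v, hvT, hev⟩ | rfl)
    · exact ⟨Or.inl heT, v, notMem_union_pair hw1 hw2 ⟨(hE _ _ hev).2, hvT⟩, Or.inl hev⟩
    · obtain ⟨v, hv⟩ := extCh_nonempty hemi
      exact ⟨by simp, v, notMem_union_pair hw1 hw2 (extCh_subset_diff hE hv),
        Or.inr (Or.inr (Or.inl ⟨rfl, hv⟩))⟩

theorem pairExtEdge_parents_eq_extPa (hE : EdgesIn V E) (hw1 : w₁ ∉ V) (hw2 : w₂ ∉ V)
    (hrec : (recs E T).Nonempty)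
    (hpar : ∀ r₁ ∈ recs E T, ∀ r₂ ∈ recs E T,
      {u | u ∉ T ∧ E u r₁} = {u | u ∉ T ∧ E u r₂}) :
    ∀ r ∈ recs (PairExtEdge E T w₁ w₂) (T ∪ {w₁, w₂}),
      {u | u ∉ T ∪ {w₁, w₂} ∧ PairExtEdge E T w₁ w₂ u r} = ExtPa E T := by
  rw [recs_pairExtEdge hE hw1 hw2 hrec]
  rintro r (hr | rfl)
  · obtain ⟨u, -, hur⟩ := hr.2
    rw [pairExtEdge_parents_of_mem hE hw1 hw2 (hE _ _ hur).2, parents_eq_extPa hpar hr]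
  · exact pairExtEdge_parents_left hE hw1 hw2

theorem pairExtEdge_children_eq_extCh (hE : EdgesIn V E) (hw1 : w₁ ∉ V) (hw2 : w₂ ∉ V)
    (hemi : (emis E T).Nonempty)
    (hch : ∀ e₁ ∈ emis E T, ∀ e₂ ∈ emis E T,
      {v | v ∉ T ∧ E e₁ v} = {v | v ∉ T ∧ E e₂ v}) :
    ∀ e ∈ emis (PairExtEdge E T w₁ w₂) (T ∪ {w₁, w₂}),
      {v | v ∉ T ∪ {w₁, w₂} ∧ PairExtEdge E T w₁ w₂ e v} = ExtCh E T := by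
  rw [emis_pairExtEdge hE hw1 hw2 hemi]
  rintro e (he | rfl)
  · obtain ⟨v, -, hev⟩ := he.2
    rw [pairExtEdge_children_of_mem hE hw1 hw2 (hE _ _ hev).1, children_eq_extCh hch he]
  · exact pairExtEdge_children_right hE hw1 hw2

theorem extPa_pairExtEdge (hE : EdgesIn V E) (hw1 : w₁ ∉ V) (hw2 : w₂ ∉ V)
    (hrec : (recs E T).Nonempty)
    (hpar : ∀ r₁ ∈ recs E T, ∀ r₂ ∈ recs E T,
      {u | u ∉ T ∧ E u r₁} = {u | u ∉ T ∧ E u r₂}) :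
    ExtPa (PairExtEdge E T w₁ w₂) (T ∪ {w₁, w₂}) = ExtPa E T :=
  extPa_eq_of_forall_parents_eq ⟨w₁, by rw [recs_pairExtEdge hE hw1 hw2 hrec]; exact Or.inr rfl⟩
    (pairExtEdge_parents_eq_extPa hE hw1 hw2 hrec hpar)

theorem extCh_pairExtEdge (hE : EdgesIn V E) (hw1 : w₁ ∉ V) (hw2 : w₂ ∉ V)
    (hemi : (emis E T).Nonempty)
    (hch : ∀ e₁ ∈ emis E T, ∀ e₂ ∈ emis E T,
      {v | v ∉ T ∧ E e₁ v} = {v | v ∉ T ∧ E e₂ v}) :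
    ExtCh (PairExtEdge E T w₁ w₂) (T ∪ {w₁, w₂}) = ExtCh E T :=
  extCh_eq_of_forall_children_eq ⟨w₂, by rw [emis_pairExtEdge hE hw1 hw2 hemi]; exact Or.inr rfl⟩
    (pairExtEdge_children_eq_extCh hE hw1 hw2 hemi hch)

theorem cutEdge_pairExtEdge (hE : EdgesIn V E) (hw1 : w₁ ∉ V) (hw2 : w₂ ∉ V)
    (hrec : (recs E T).Nonempty) (hemi : (emis E T).Nonempty) {u v : α}
    (h : CutEdge E T u v) : CutEdge (PairExtEdge E T w₁ w₂) (T ∪ {w₁, w₂}) u v := by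
  obtain ⟨huT, hvT, huv, hvr, hue⟩ := h
  obtain ⟨huV, hvV⟩ := hE _ _ huv
  refine ⟨Or.inl huT, Or.inl hvT, Or.inl huv, ?_, ?_⟩
  · rw [recs_pairExtEdge hE hw1 hw2 hrec]
    rintro (hvr' | rfl)
    exacts [hvr hvr', hw1 hvV]
  · rw [emis_pairExtEdge hE hw1 hw2 hemi]
    rintro (hue' | rfl)
    exacts [hue hue', hw2 huV]

theorem isTransitCluster_pairExtEdge (hE : EdgesIn V E) (hT : IsTransitCluster V E T)
    (hrec : (recs E T).Nonempty) (hemi : (emis E T).Nonempty)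
    (hw1 : w₁ ∉ V) (hw2 : w₂ ∉ V) :
    IsTransitCluster (V ∪ {w₁, w₂}) (PairExtEdge E T w₁ w₂) (T ∪ {w₁, w₂}) := by
  obtain ⟨hTne, hTV, hpar, hch, hconn, hre, her⟩ := hT
  have hrecs := recs_pairExtEdge hE hw1 hw2 hrec
  have hemis := emis_pairExtEdge hE hw1 hw2 hemi
  have hmono : ∀ a b, E a b → PairExtEdge E T w₁ w₂ a b := fun _ _ => Or.inl
  refine ⟨hTne.mono Set.subset_union_left, ?_, ?_, ?_, ?_, ?_, ?_⟩
  · obtain ⟨x, hxV, hxT⟩ := Set.exists_of_ssubset hTV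
    exact (Set.ssubset_iff_of_subset (Set.union_subset_union_left _ hTV.1)).2
      ⟨x, Or.inl hxV, notMem_union_pair hw1 hw2 ⟨hxV, hxT⟩⟩
  · intro r₁ hr₁ r₂ hr₂
    rw [pairExtEdge_parents_eq_extPa hE hw1 hw2 hrec hpar r₁ hr₁,
      pairExtEdge_parents_eq_extPa hE hw1 hw2 hrec hpar r₂ hr₂]
  · intro e₁ he₁ e₂ he₂
    rw [pairExtEdge_children_eq_extCh hE hw1 hw2 hemi hch e₁ he₁,
      pairExtEdge_children_eq_extCh hE hw1 hw2 hemi hch e₂ he₂]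
  · rw [hrecs, hemis]
    rintro x (hxT | rfl | rfl)
    · obtain ⟨w, hw, hreach⟩ := hconn x hxT
      exact ⟨w, hw.imp Or.inl Or.inl, hreach.mono fun _ _ =>
        cutEdge_pairExtEdge hE hw1 hw2 hrec hemi⟩
    · exact ⟨_, Or.inl (Or.inr rfl), .refl⟩
    · exact ⟨_, Or.inr (Or.inr rfl), .refl⟩
  · rw [hrecs, hemis]
    rintro - r (hr | rfl)
    · obtain ⟨e, he, hpath⟩ := hre hemi r hr
      exact ⟨e, Or.inl he, Relation.ReflTransGen.mono hmono _ _ hpath⟩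
    · exact ⟨w₂, Or.inr rfl, .single (Or.inr (Or.inr (Or.inr ⟨rfl, rfl⟩)))⟩
  · rw [hrecs, hemis]
    rintro - e (he | rfl)
    · obtain ⟨r, hr, hpath⟩ := her hrec e he
      exact ⟨r, Or.inl hr, Relation.ReflTransGen.mono hmono _ _ hpath⟩
    · exact ⟨w₁, Or.inr rfl, .single (Or.inr (Or.inr (Or.inr ⟨rfl, rfl⟩)))⟩

end PairExtension

theorem peripheral_add_receiver_emitter_general
    (V : Set α) (E : α → α → Prop) (T : Set α) (w₁ w₂ t : α)
    (hdag : IsDAG V E)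
    (hT : IsTransitCluster V E T)
    (hrec : (recs E T).Nonempty)
    (hemi : (emis E T).Nonempty)
    (hw1 : w₁ ∉ V) (hw2 : w₂ ∉ V) :
    IsTransitCluster (V ∪ {w₁, w₂}) (PairExtEdge E T w₁ w₂) (T ∪ {w₁, w₂}) ∧
    ClusterVerts (V ∪ {w₁, w₂}) (T ∪ {w₁, w₂}) t = ClusterVerts V T t ∧
    ClusterEdge (PairExtEdge E T w₁ w₂) (T ∪ {w₁, w₂}) t = ClusterEdge E T t := by
  obtain ⟨-, hE, -⟩ := hdag
  refine ⟨isTransitCluster_pairExtEdge hE hT hrec hemi hw1 hw2,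
    clusterVerts_union_of_disjoint t (by simp [hw1, hw2]), ?_⟩
  obtain ⟨-, -, hpar, hch, -⟩ := hT
  exact clusterEdge_eq_of_external_eq t (pairExtEdge_external_iff hE hw1 hw2)
    (extPa_pairExtEdge hE hw1 hw2 hrec hpar) (extCh_pairExtEdge hE hw1 hw2 hemi hch)

/-- peripheral extension, operation 8 (adding a receiver-emitter
pair). -/
theorem peripheral_add_receiver_emitter
    (V : Set α) (E : α → α → Prop) (T : Set α) (w₁ w₂ t : α)
    (hdag : IsDAG V E)
    (hT : IsTransitCluster V E T)
    (hrec : (recs E T).Nonempty)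
    (hemi : (emis E T).Nonempty)
    (hw1 : w₁ ∉ V) (hw2 : w₂ ∉ V) (hne : w₁ ≠ w₂)
    (ht : t ∉ V) (htw1 : t ≠ w₁) (htw2 : t ≠ w₂) :
    IsTransitCluster (V ∪ {w₁, w₂}) (PairExtEdge E T w₁ w₂) (T ∪ {w₁, w₂}) ∧
    ClusterVerts (V ∪ {w₁, w₂}) (T ∪ {w₁, w₂}) t = ClusterVerts V T t ∧
    ClusterEdge (PairExtEdge E T w₁ w₂) (T ∪ {w₁, w₂}) t = ClusterEdge E T t :=
  peripheral_add_receiver_emitter_general V E T w₁ w₂ t hdag hT hrec hemi hw1 hw2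
end
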